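/- For λ > 0, q ∈ (0,1], γ > 0, θ > 0, and α > 2, the double integral 2πλqγ ∫₀^∞ ∫₀^∞ g·r^{-α}·1{g·r^{-α} < θ}·r·e^{-g} dr dg equals (4/(α(α-2)))·π·λ·q·γ·θ^{1-2/α}·Γ(2/α). -/
import Mathlib

open Real MeasureTheory Set

private theorem inner_eval (θ α : ℝ) (hθ : 0 < θ) (hα : 2 < α) {g : ℝ} (hg : 0 < g) :
    (∫ r in Ioi (0:ℝ),
        g * r ^ (-α) * (if g * r ^ (-α) < θ then (1:ℝ) else 0) * r * Real.exp (-g))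
    = (θ ^ (1 - 2/α) / (α - 2)) * (Real.exp (-g) * g ^ (2/α)) := by
  have hα0 : (0:ℝ) < α := by linarith
  set R : ℝ := (g / θ) ^ α⁻¹ with hRdef
  have hgθ : 0 < g / θ := div_pos hg hθ
  have hR : 0 < R := rpow_pos_of_pos hgθ _
  have hRα : R ^ α = g / θ := Real.rpow_inv_rpow hgθ.le (ne_of_gt hα0)
  have key : EqOn (fun r : ℝ => g * r ^ (-α) * (if g * r ^ (-α) < θ then (1:ℝ) else 0) * r * Real.exp (-g))
      ((Ioi R).indicator (fun r : ℝ => (g * Real.exp (-g)) * r ^ (1-α))) (Ioi 0) := by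
    intro r hr
    simp only [mem_Ioi] at hr
    have hiff : g * r ^ (-α) < θ ↔ R < r := by
      rw [Real.rpow_neg hr.le, mul_inv_lt_iff₀ (rpow_pos_of_pos hr α),
        ← div_lt_iff₀' hθ, ← hRα]
      exact Real.rpow_lt_rpow_iff hR.le hr.le hα0
    by_cases h : R < r
    · simp only [indicator_of_mem (mem_Ioi.mpr h), if_pos (hiff.mpr h)]
      rw [show (1:ℝ) - α = -α + 1 by ring, Real.rpow_add_one (ne_of_gt hr)]
      ring
    · simp only [indicator_of_notMem (fun hc => h (mem_Ioi.mp hc)),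
        if_neg (fun hc => h (hiff.mp hc))]
      ring
  rw [setIntegral_congr_fun measurableSet_Ioi key,
    setIntegral_indicator measurableSet_Ioi,
    inter_eq_right.mpr (Ioi_subset_Ioi hR.le),
    MeasureTheory.integral_const_mul,
    integral_Ioi_rpow_of_lt (by linarith) hR]
  have h1 : (1:ℝ) - α + 1 = 2 - α := by ring
  have hs : α⁻¹ * (2 - α) = 2/α - 1 := by field_simp
  rw [h1, hRdef, ← Real.rpow_mul hgθ.le, hs, Real.div_rpow hg.le hθ.le,
    Real.rpow_sub hg, Real.rpow_sub hθ, Real.rpow_sub hθ, Real.rpow_one]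
  have h2 : g ^ (2/α) ≠ 0 := by positivity
  have h3 : θ ^ (2/α) ≠ 0 := by positivity
  have h4 : α - 2 ≠ 0 := by linarith
  have h5 : (2:ℝ) - α ≠ 0 := by linarith
  field_simp
  ring

/-- Mean interference power received from transmitting non-neighbors (channel gain
below threshold `θ`) in a Poisson network of intensity `lam` with transmission
probability `q`, transmit SNR `γ`, path-loss exponent `α > 2`, exponential(1) fading. -/
theorem mean_nonneighbor_interference (lam q γ θ α : ℝ)
    (hlam : 0 < lam) (hq0 : 0 < q) (hq1 : q ≤ 1) (hγ : 0 < γ) (hθ : 0 < θ) (hα : 2 < α) :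
    2 * π * lam * q * γ *
      ∫ g in Ioi (0:ℝ), (∫ r in Ioi (0:ℝ),
        g * r ^ (-α) * (if g * r ^ (-α) < θ then (1:ℝ) else 0) * r * Real.exp (-g))
    = (4 / (α * (α - 2))) * π * lam * q * γ * θ ^ (1 - 2 / α) * Real.Gamma (2 / α) := by
  have hα0 : (0:ℝ) < α := by linarith
  rw [setIntegral_congr_fun measurableSet_Ioi
    (fun g hg => inner_eval θ α hθ hα (mem_Ioi.mp hg)),
    MeasureTheory.integral_const_mul]
  have hgamma : ∫ g in Ioi (0:ℝ), Real.exp (-g) * g ^ (2/α) = Real.Gamma (2/α + 1) := by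
    rw [Real.Gamma_eq_integral (by positivity)]
    norm_num
  rw [hgamma, Real.Gamma_add_one (by positivity)]
  have h4 : α - 2 ≠ 0 := by linarith
  field_simp
  ring
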